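/- arXiv:1402.3547 — 4 statements merged into one kernel-verified Lean document; each statement's English description precedes it below -/
import Mathlib

section
/- With t as above, the probability that there exist a p-subset X of E and a (k−p)-subset Y of E \ X such that no F_i contains X and is disjoint from Y is at most 1/n. -/
open MeasureTheory Finset Real

open scoped ENNReal NNReal

set_option linter.deprecated false

/-!
A single random set contains a fixed `p`-set `X` and avoids a disjoint `(k-p)`-set `Y` with
probability `r = q^p (1-q)^(k-p)`, `q = p/(ck)`, and `1/r` is exactly the constant in the bound on
`t`. Hence all `t` independent sets fail for `(X, Y)` with probability
`(1-r)^t ≤ exp(-rt) ≤ n^-(k+1)`, and a union bound over the at most `n^p · n^(k-p) = n^k` pairs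
gives `1/n`.
-/

/-- The functions `g : E → Bool`, read as subsets of `E`, that contain `X` and avoid `Y`. -/
def includeExclude {E : Type*} (X Y : Finset E) : Set (E → Bool) :=
  {g | (∀ x ∈ X, g x = true) ∧ ∀ y ∈ Y, g y = false}

lemma includeExclude_eq_pi {E : Type*} [DecidableEq E] {X Y : Finset E} (hXY : Disjoint X Y) :
    includeExclude X Y = ((X ∪ Y : Finset E) : Set E).pi fun e => {decide (e ∈ X)} := by
  ext g
  simp only [includeExclude, Set.mem_setOf_eq, Set.mem_pi, coe_union, Set.mem_union,
    mem_coe, Set.mem_singleton_iff]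
  constructor
  · rintro ⟨hX, hY⟩ e (he | he)
    · simp [he, hX e he]
    · simp [disjoint_right.mp hXY he, hY e he]
  · intro h
    exact ⟨fun x hx => by simpa [hx] using h x (.inl hx),
      fun y hy => by simpa [disjoint_right.mp hXY hy] using h y (.inr hy)⟩

lemma measure_pi_bernoulli_includeExclude {E : Type*} [Fintype E] (q : ℝ≥0) (hq : q ≤ 1)
    {X Y : Finset E} (hXY : Disjoint X Y) :
    Measure.pi (fun _ : E => (PMF.bernoulli q hq).toMeasure) (includeExclude X Y)
      = (q : ℝ≥0∞) ^ #X * (1 - q) ^ #Y := by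
  classical
  rw [includeExclude_eq_pi hXY, Measure.pi_pi_finset, prod_union hXY]
  have hX : ∀ e ∈ X, (PMF.bernoulli q hq).toMeasure {decide (e ∈ X)} = q := fun e he => by
    simp [he, PMF.bernoulli_apply]
  have hY : ∀ e ∈ Y, (PMF.bernoulli q hq).toMeasure {decide (e ∈ X)} = 1 - q := fun e he => by
    simp [disjoint_right.mp hXY he, PMF.bernoulli_apply, ENNReal.coe_sub]
  rw [prod_congr rfl hX, prod_congr rfl hY, prod_const, prod_const]

lemma measure_pi_forall_notMem {ι α : Type*} [Fintype ι] [MeasurableSpace α] (ν : Measure α)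
    [IsProbabilityMeasure ν] {B : Set α} (hB : MeasurableSet B) :
    Measure.pi (fun _ : ι => ν) {F | ∀ i, F i ∉ B} = (1 - ν B) ^ Fintype.card ι := by
  have hset : {F : ι → α | ∀ i, F i ∉ B} = Set.univ.pi fun _ => Bᶜ := by
    ext F; simp
  rw [hset, Measure.pi_pi, prod_const, card_univ, prob_compl_eq_one_sub hB]

lemma card_powersetCard_product_le {E : Type*} [Fintype E] (a b : ℕ) :
    #(powersetCard a (univ : Finset E) ×ˢ powersetCard b (univ : Finset E))
      ≤ Fintype.card E ^ (a + b) := by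
  rw [card_product, card_powersetCard, card_powersetCard, card_univ, pow_add]
  exact Nat.mul_le_mul (Nat.choose_le_pow _ _) (Nat.choose_le_pow _ _)

lemma div_pow_mul_one_sub_div_pow {a : ℝ} (ha : a ≠ 0) (x : ℝ) {p k : ℕ} (hpk : p ≤ k) :
    (x / a) ^ p * (1 - x / a) ^ (k - p) = x ^ p * (a - x) ^ (k - p) / a ^ k := by
  rw [one_sub_div ha, div_pow, div_pow, div_mul_div_comm, ← pow_add, Nat.add_sub_cancel' hpk]

lemma one_sub_pow_le_inv_pow {r n : ℝ} {t m : ℕ} (hr : r ≤ 1) (hn : 0 < n)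
    (h : m * log n ≤ r * t) : (1 - r) ^ t ≤ (n ^ m)⁻¹ := by
  calc (1 - r) ^ t ≤ exp (-r) ^ t := pow_le_pow_left₀ (by linarith) (one_sub_le_exp_neg r) t
    _ = exp (-(r * t)) := by rw [← exp_nat_mul]; ring_nf
    _ ≤ exp (-(m * log n)) := exp_le_exp.2 (by linarith)
    _ = (n ^ m)⁻¹ := by rw [exp_neg, exp_nat_mul, exp_log hn]

lemma ofReal_pow_mul_one_sub_ofReal_pow {x : ℝ} (hx0 : 0 ≤ x) (hx1 : x ≤ 1) (a b : ℕ) :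
    ENNReal.ofReal x ^ a * (1 - ENNReal.ofReal x) ^ b = ENNReal.ofReal (x ^ a * (1 - x) ^ b) := by
  rw [← ENNReal.ofReal_one, ← ENNReal.ofReal_sub 1 hx0, ← ENNReal.ofReal_pow hx0,
    ← ENNReal.ofReal_pow (by linarith), ← ENNReal.ofReal_mul (by positivity)]

lemma measure_pi_forall_notMem_includeExclude_le {E : Type*} [Fintype E] (q : ℝ≥0)
    (hq : q ≤ 1) {X Y : Finset E} (hXY : Disjoint X Y) {n : ℝ} (hn : 0 < n) {m t : ℕ}
    (h : m * log n ≤ (q : ℝ) ^ #X * (1 - q) ^ #Y * t) :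
    Measure.pi (fun _ : Fin t => Measure.pi fun _ : E => (PMF.bernoulli q hq).toMeasure)
      {F | ∀ i, F i ∉ includeExclude X Y} ≤ ENNReal.ofReal (n ^ m)⁻¹ := by
  have hq' : (q : ℝ) ≤ 1 := hq
  set r : ℝ := (q : ℝ) ^ #X * (1 - q) ^ #Y
  have hr0 : 0 ≤ r := mul_nonneg (by positivity) (pow_nonneg (by linarith) _)
  have hr1 : r ≤ 1 := mul_le_one₀ (pow_le_one₀ q.coe_nonneg hq') (pow_nonneg (by linarith) _)
    (pow_le_one₀ (by linarith) (by linarith))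
  rw [measure_pi_forall_notMem _ ((Set.toFinite _).measurableSet),
    measure_pi_bernoulli_includeExclude _ _ hXY, Fintype.card_fin, ← ENNReal.ofReal_coe_nnreal,
    ofReal_pow_mul_one_sub_ofReal_pow q.coe_nonneg hq', ← ENNReal.ofReal_one,
    ← ENNReal.ofReal_sub 1 hr0, ← ENNReal.ofReal_pow (by linarith)]
  exact ENNReal.ofReal_le_ofReal (one_sub_pow_le_inv_pow hr1 hn h)

lemma succ_mul_log_le_expected_hits {n k p t : ℕ} {c : ℝ} (hp : 1 ≤ p) (hpk : p ≤ k)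
    (hc : 1 ≤ c)
    (ht : ((c * k) ^ k / ((p : ℝ) ^ p * (c * k - p) ^ (k - p))) * (k + 1) * log n ≤ t) :
    ((k + 1 : ℕ) : ℝ) * log n ≤ (p / (c * k)) ^ p * (1 - p / (c * k)) ^ (k - p) * t := by
  have hk : (1 : ℝ) ≤ k := by exact_mod_cast hp.trans hpk
  have hck : 0 < c * k := by nlinarith
  set x : ℝ := p / (c * k)
  have hx0 : 0 < x := div_pos (by exact_mod_cast hp) hck
  set r := x ^ p * (1 - x) ^ (k - p)
  have hr0 : 0 < r := by
    rcases hpk.eq_or_lt with rfl | hlt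
    · simpa [r] using pow_pos hx0 p
    · have : x < 1 := (div_lt_one hck).2 (by nlinarith [(Nat.cast_lt (α := ℝ)).2 hlt])
      exact mul_pos (pow_pos hx0 _) (pow_pos (by linarith) _)
  rw [← inv_div, ← div_pow_mul_one_sub_div_pow hck.ne' _ hpk] at ht
  calc ((k + 1 : ℕ) : ℝ) * log n = r * (r⁻¹ * (k + 1) * log n) := by
        field_simp; push_cast; ring
    _ ≤ r * t := by gcongr

/-- Union bound: with `t` i.i.d. random subsets as before, the probability that there
exist a `p`-subset `X` and a `(k-p)`-subset `Y` of `E \ X` such that no `F i` contains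
`X` and is disjoint from `Y` is at most `1/n`. -/
theorem stmt3 {E : Type*} [Fintype E] (n k p t : ℕ) (c : ℝ)
    (hn : Fintype.card E = n) (hn2 : 2 ≤ n)
    (hp : 1 ≤ p) (hpk : p ≤ k) (hc : 1 ≤ c) (hq : (p : ℝ) / (c * k) ≤ 1)
    (ht : ((c * k) ^ k / ((p : ℝ) ^ p * (c * k - p) ^ (k - p))) * (k + 1) * Real.log n
      ≤ t) :
    Measure.pi (fun _ : Fin t => Measure.pi (fun _ : E =>
        (PMF.bernoulli (Real.toNNReal ((p : ℝ) / (c * k)))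
          (Real.toNNReal_le_one.mpr hq)).toMeasure))
      {F : Fin t → E → Bool | ∃ X Y : Finset E, X.card = p ∧ Y.card = k - p ∧
        Disjoint X Y ∧
        ∀ i, ¬ ((∀ x ∈ X, F i x = true) ∧ (∀ y ∈ Y, F i y = false))}
      ≤ ENNReal.ofReal (1 / n) := by
  classical
  set μ := Measure.pi fun _ : Fin t => Measure.pi fun _ : E =>
    (PMF.bernoulli (Real.toNNReal ((p : ℝ) / (c * k))) (Real.toNNReal_le_one.mpr hq)).toMeasure
  have hn0 : (0 : ℝ) < n := by exact_mod_cast (by omega : 0 < n)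
  set S := (powersetCard p (univ : Finset E) ×ˢ powersetCard (k - p) univ).filter
    fun s => Disjoint s.1 s.2
  have hS : #S ≤ n ^ k := by
    simpa [hn, Nat.add_sub_cancel' hpk] using
      (card_filter_le _ _).trans (card_powersetCard_product_le (E := E) p (k - p))
  have hpair : ∀ s ∈ S, μ {F | ∀ i, F i ∉ includeExclude s.1 s.2}
      ≤ ENNReal.ofReal (n ^ (k + 1) : ℝ)⁻¹ := fun s hs => by
    simp only [S, mem_filter, mem_product, mem_powersetCard] at hs
    refine measure_pi_forall_notMem_includeExclude_le _ _ hs.2 hn0 ?_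
    rw [hs.1.1.2, hs.1.2.2, Real.coe_toNNReal _ (by positivity)]
    exact succ_mul_log_le_expected_hits hp hpk hc ht
  calc μ _ ≤ μ (⋃ s ∈ S, {F | ∀ i, F i ∉ includeExclude s.1 s.2}) := measure_mono <| by
        rintro F ⟨X, Y, hX, hY, hXY, hF⟩
        exact Set.mem_biUnion (x := (X, Y)) (by simp [S, hX, hY, hXY]) hF
    _ ≤ ∑ s ∈ S, μ {F | ∀ i, F i ∉ includeExclude s.1 s.2} := measure_biUnion_finset_le _ _
    _ ≤ #S • ENNReal.ofReal (n ^ (k + 1) : ℝ)⁻¹ := sum_le_card_nsmul _ _ _ hpair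
    _ ≤ (n ^ k) • ENNReal.ofReal (n ^ (k + 1) : ℝ)⁻¹ := by gcongr
    _ = ENNReal.ofReal (1 / n) := by
        rw [nsmul_eq_mul, ← ENNReal.ofReal_natCast, ← ENNReal.ofReal_mul (by positivity)]
        congr 1
        push_cast
        field_simp
        ring
end

section
/- If a set-cover style dynamic program maintains, for each size j ≤ k, a q-representative family of its partial solutions, then correctness is preserved: specifically, if for each X in S there exists X̂ in Ŝ with X̂ ∩ Y = ∅ whenever |X ∪ Y| ≤ k, and similarly T̂ represents T, then the family {X̂ ∪ {e} : X̂ ∈ Ŝ, e ∉ X̂} ∪ T̂ represents {X ∪ {e} : X ∈ S, e ∉ X} ∪ T. -/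
/-- `A` represents `B` (unweighted): `A ⊆ B` and for every `X ∈ B` and every `Y`
disjoint from `X` with `|X ∪ Y| ≤ k`, some `X' ∈ A` is disjoint from `Y`. -/
def Represents {E : Type*} [DecidableEq E] (k : ℕ) (A B : Finset (Finset E)) : Prop :=
  A ⊆ B ∧ ∀ X ∈ B, ∀ Y : Finset E, Disjoint X Y → (X ∪ Y).card ≤ k →
    ∃ X' ∈ A, X' ∩ Y = ∅

namespace Represents

open Finset

variable {E : Type*} [DecidableEq E] {k : ℕ} {A B A' B' : Finset (Finset E)}

theorem union (h : Represents k A B) (h' : Represents k A' B') :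
    Represents k (A ∪ A') (B ∪ B') := by
  refine ⟨union_subset_union h.1 h'.1, fun X hX Y hXY hcard => ?_⟩
  rcases mem_union.mp hX with hX | hX
  · obtain ⟨X', hX', hX'Y⟩ := h.2 X hX Y hXY hcard
    exact ⟨X', mem_union_left _ hX', hX'Y⟩
  · obtain ⟨X', hX', hX'Y⟩ := h'.2 X hX Y hXY hcard
    exact ⟨X', mem_union_right _ hX', hX'Y⟩

/-- A witness for `insert e X` against `Y` is a witness for `X` against `insert e Y`, extended
by `e`. -/
theorem image_insert (e : E) (h : Represents k A B) :
    Represents k ((A.filter (e ∉ ·)).image (insert e)) ((B.filter (e ∉ ·)).image (insert e)) := by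
  refine ⟨image_subset_image (filter_subset_filter _ h.1), ?_⟩
  simp only [mem_image, mem_filter, forall_exists_index, and_imp]
  rintro _ X hX heX rfl Y hXY hcard
  obtain ⟨heY, hXY⟩ := disjoint_insert_left.mp hXY
  have hXeY : Disjoint X (insert e Y) := disjoint_insert_right.mpr ⟨heX, hXY⟩
  have hcard' : (X ∪ insert e Y).card ≤ k := by rwa [union_insert, ← insert_union]
  obtain ⟨X', hX', hX'eY⟩ := h.2 X hX (insert e Y) hXeY hcard'
  obtain ⟨heX', hX'Y⟩ := disjoint_insert_right.mp (disjoint_iff_inter_eq_empty.mpr hX'eY)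
  exact ⟨insert e X', ⟨X', ⟨hX', heX'⟩, rfl⟩,
    disjoint_iff_inter_eq_empty.mp (disjoint_insert_left.mpr ⟨heY, hX'Y⟩)⟩

end Represents

theorem stmt12_general {E : Type*} [DecidableEq E] (k : ℕ) (e : E)
    (S T Shat That : Finset (Finset E))
    (h1 : Represents k Shat S) (h2 : Represents k That T) :
    Represents k
      (((Shat.filter (fun X => e ∉ X)).image (fun X => insert e X)) ∪ That)
      (((S.filter (fun X => e ∉ X)).image (fun X => insert e X)) ∪ T) :=
  (h1.image_insert e).union h2

theorem stmt12 {E : Type*} [DecidableEq E] [Fintype E] (k p : ℕ) (hk : 1 ≤ k) (e : E)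
    (S T Shat That : Finset (Finset E))
    (hSp : ∀ X ∈ S, X.card = p) (hTp : ∀ X ∈ T, X.card = p + 1)
    (h1 : Represents k Shat S) (h2 : Represents k That T) :
    Represents k
      (((Shat.filter (fun X => e ∉ X)).image (fun X => insert e X)) ∪ That)
      (((S.filter (fun X => e ∉ X)).image (fun X => insert e X)) ∪ T) :=
  stmt12_general k e S T Shat That h1 h2
end

section
/- The greedy selection via a separator yields a representative family: suppose F is a family of subsets of E such that for every p-subset X and every (k−p)-subset Y of E \ X, some F ∈ F satisfies X ⊆ F and Y ∩ F = ∅. Order S = {S_1,...,S_m} by nonincreasing weight, and let Ŝ = {S_i : χ(S_i) \ ⋃_{j<i} χ(S_j) ≠ ∅} where χ(S) = {F ∈ F : S ⊆ F}. Then Ŝ max-represents S. -/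
/-! Given `S i` and `Y`, enlarge `Y` to a `(k - p)`-set avoiding `S i` and pick a separating
`f ∈ F` with `S i ⊆ f`. The least `j` with `S j ⊆ f` is selected, because `f` is a new member of
`chi F (S j)`; as `j ≤ i`, `w (S i) ≤ w (S j)`, and `S j ⊆ f` misses `Y`. -/

open Finset

/-- `chi F S` is the subfamily of sets in `F` containing `S`. -/
def chi {E : Type*} [DecidableEq E] (F : Finset (Finset E)) (S : Finset E) :
    Finset (Finset E) :=
  F.filter (fun f => S ⊆ f)

theorem exists_le_mem_not_subset_biUnion_lt {ι β : Type*} [Fintype ι] [LinearOrder ι]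
    [DecidableEq β] (C : ι → Finset β) {i : ι} {x : β} (hx : x ∈ C i) :
    ∃ j ≤ i, x ∈ C j ∧ ¬ C j ⊆ (univ.filter (· < j)).biUnion C := by
  set s := univ.filter (fun j => x ∈ C j)
  have hs : s.Nonempty := ⟨i, mem_filter.mpr ⟨mem_univ _, hx⟩⟩
  have hxj : x ∈ C (s.min' hs) := (mem_filter.mp (s.min'_mem hs)).2
  refine ⟨s.min' hs, s.min'_le i (mem_filter.mpr ⟨mem_univ _, hx⟩), hxj, fun hsub => ?_⟩
  obtain ⟨l, hl, hxl⟩ := mem_biUnion.mp (hsub hxj)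
  exact (mem_filter.mp hl).2.not_ge (s.min'_le l (mem_filter.mpr ⟨mem_univ _, hxl⟩))

theorem exists_mem_subset_disjoint_of_card_le {E : Type*} [DecidableEq E] [Fintype E]
    {F : Finset (Finset E)} {k p : ℕ} (hkn : k ≤ Fintype.card E)
    (hsep : ∀ X Y : Finset E, X.card = p → Y.card = k - p → Disjoint X Y →
      ∃ f ∈ F, X ⊆ f ∧ Disjoint Y f)
    {X Y : Finset E} (hX : X.card = p) (hY : Y.card ≤ k - p) (hXY : Disjoint X Y) :
    ∃ f ∈ F, X ⊆ f ∧ Disjoint Y f := by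
  have hYc : Y ⊆ Xᶜ := fun y hy => mem_compl.mpr fun hyX => disjoint_left.mp hXY hyX hy
  have hcard : k - p ≤ (Xᶜ).card := by rw [card_compl, hX]; omega
  obtain ⟨Y', hYY', hY'c, hY'card⟩ := exists_subsuperset_card_eq hYc hY hcard
  obtain ⟨f, hfF, hXf, hY'f⟩ :=
    hsep X Y' hX hY'card (disjoint_right.mpr fun a ha => mem_compl.mp (hY'c ha))
  exact ⟨f, hfF, hXf, hY'f.mono_left hYY'⟩

theorem stmt14_general {E : Type*} [DecidableEq E] [Fintype E] (k p m : ℕ)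
    (hkn : k ≤ Fintype.card E)
    (S : Fin m → Finset E) (hcard : ∀ i, (S i).card = p)
    (w : Finset E → ℝ) (hw : ∀ i j : Fin m, i ≤ j → w (S j) ≤ w (S i))
    (F : Finset (Finset E))
    (hsep : ∀ X Y : Finset E, X.card = p → Y.card = k - p → Disjoint X Y →
      ∃ f ∈ F, X ⊆ f ∧ Disjoint Y f)
    (Shat : Finset (Finset E))
    (hShat : Shat = Finset.image S ((Finset.univ : Finset (Fin m)).filter
      (fun i => ¬ (chi F (S i) ⊆
        (Finset.univ.filter (fun j => j < i)).biUnion (fun j => chi F (S j)))))) :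
    Shat ⊆ Finset.image S Finset.univ ∧
    ∀ i : Fin m, ∀ Y : Finset E, Disjoint (S i) Y → Y.card ≤ k - p →
      ∃ X' ∈ Shat, X' ∩ Y = ∅ ∧ w (S i) ≤ w X' := by
  subst hShat
  refine ⟨image_subset_image (filter_subset _ _), fun i Y hSY hY => ?_⟩
  obtain ⟨f, hfF, hSf, hYf⟩ := exists_mem_subset_disjoint_of_card_le hkn hsep (hcard i) hY hSY
  obtain ⟨j, hji, hfj, hnew⟩ :=
    exists_le_mem_not_subset_biUnion_lt (fun j => chi F (S j)) (mem_filter.mpr ⟨hfF, hSf⟩)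
  refine ⟨S j, mem_image_of_mem S (mem_filter.mpr ⟨mem_univ _, hnew⟩), ?_, hw j i hji⟩
  exact disjoint_iff_inter_eq_empty.mp (hYf.symm.mono_left (mem_filter.mp hfj).2)

/-- Greedy selection via a separator yields a max-representative family. -/
theorem stmt14 {E : Type*} [DecidableEq E] [Fintype E] (k p m : ℕ)
    (hp : 1 ≤ p) (hpk : p ≤ k) (hkn : k ≤ Fintype.card E)
    (S : Fin m → Finset E) (hcard : ∀ i, (S i).card = p)
    (w : Finset E → ℝ) (hw : ∀ i j : Fin m, i ≤ j → w (S j) ≤ w (S i))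
    (F : Finset (Finset E))
    (hsep : ∀ X Y : Finset E, X.card = p → Y.card = k - p → Disjoint X Y →
      ∃ f ∈ F, X ⊆ f ∧ Disjoint Y f)
    (Shat : Finset (Finset E))
    (hShat : Shat = Finset.image S ((Finset.univ : Finset (Fin m)).filter
      (fun i => ¬ (chi F (S i) ⊆
        (Finset.univ.filter (fun j => j < i)).biUnion (fun j => chi F (S j)))))) :
    Shat ⊆ Finset.image S Finset.univ ∧
    ∀ i : Fin m, ∀ Y : Finset E, Disjoint (S i) Y → Y.card ≤ k - p →
      ∃ X' ∈ Shat, X' ∩ Y = ∅ ∧ w (S i) ≤ w X' :=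
  stmt14_general k p m hkn S hcard w hw F hsep Shat hShat
end

section
/- The failure probability bound for the degree parameter: under the random construction with t sets, P(there exists a p-subset S of E with |χ(S)| ≥ 6·t·(p/(ck))^p) ≤ binom(n,p)·n^{−k−1} ≤ 1/n. -/
/-!
Fix a `p`-set `S` and put `q = p/(ck)`. Each `F i` contains `S` independently with probability
`q^p`, so `|χ(S)| ≥ m := ⌈6 t q^p⌉` forces some `m` of the `t` indices to all contain `S`, which has
probability at most `C(t,m) q^(pm) ≤ (e t q^p / m)^m ≤ (e/6)^m ≤ 2^(-m)`. The choice of `t` gives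
`t q^p ≥ (k+1) ln n`, hence `2^(-m) ≤ n^(-(k+1))`; a union bound over the `C(n,p) ≤ n^k` sets `S`
finishes.
-/

open MeasureTheory Finset
open scoped ENNReal Nat

theorem measure_exists_card_eq_le_sum {α E : Type*} [Fintype E] [MeasurableSpace α]
    (μ : Measure α) (P : Finset E → α → Prop) (p : ℕ) :
    μ {x | ∃ S : Finset E, #S = p ∧ P S x} ≤ ∑ S ∈ powersetCard p univ, μ {x | P S x} :=
  calc _ ≤ μ (⋃ S ∈ powersetCard p univ, {x | P S x}) := measure_mono <| by
        rintro x ⟨S, hS, hx⟩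
        exact Set.mem_iUnion₂.mpr ⟨S, mem_powersetCard_univ.mpr hS, hx⟩
    _ ≤ _ := measure_biUnion_finset_le _ _

section Product

variable {ι Ω : Type*} [Fintype ι] [MeasurableSpace Ω] (ν : Measure Ω) [IsProbabilityMeasure ν]
  (A : Set Ω)

theorem measure_pi_forall_mem (T : Finset ι) :
    Measure.pi (fun _ : ι => ν) {F | ∀ i ∈ T, F i ∈ A} = ν A ^ #T := by
  classical
  have hcyl : {F : ι → Ω | ∀ i ∈ T, F i ∈ A} =
      Set.univ.pi (fun i => if i ∈ (T : Set ι) then A else Set.univ) := by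
    rw [Set.pi_univ_ite]; rfl
  rw [hcyl, Measure.pi_pi]
  simp only [Finset.mem_coe, apply_ite ν, measure_univ]
  rw [Finset.prod_ite_mem, Finset.prod_const, univ_inter]

theorem measure_pi_le_card_filter_mem_le [DecidablePred (· ∈ A)] (m : ℕ) :
    Measure.pi (fun _ : ι => ν) {F | m ≤ #{i | F i ∈ A}}
      ≤ (Fintype.card ι).choose m * ν A ^ m :=
  calc _ ≤ Measure.pi (fun _ : ι => ν) {F | ∃ T : Finset ι, #T = m ∧ ∀ i ∈ T, F i ∈ A} :=
        measure_mono fun F hF => by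
          obtain ⟨T, hT, hTcard⟩ := exists_subset_card_eq hF
          exact ⟨T, hTcard, fun i hi => (mem_filter.mp (hT hi)).2⟩
    _ ≤ _ := measure_exists_card_eq_le_sum _ _ m
    _ = (Fintype.card ι).choose m * ν A ^ m := by
        rw [sum_congr rfl fun T hT => by rw [measure_pi_forall_mem, mem_powersetCard_univ.mp hT],
          sum_const, card_powersetCard, card_univ, nsmul_eq_mul]

end Product

theorem measure_pi_bernoulli_forall_true {E : Type*} [Fintype E] (r : NNReal) (hr : r ≤ 1)
    (S : Finset E) :
    Measure.pi (fun _ : E => (PMF.bernoulli r hr).toMeasure) {g | ∀ x ∈ S, g x = true}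
      = (r : ℝ≥0∞) ^ #S := by
  change Measure.pi _ {g | ∀ x ∈ S, g x ∈ ({true} : Set Bool)} = _
  rw [measure_pi_forall_mem, PMF.toMeasure_apply_singleton _ _ (measurableSet_singleton true)]
  rfl

theorem measure_pi_bernoulli_le_card_filter_forall_le {ι E : Type*} [Fintype ι] [Fintype E]
    [DecidableEq E] (r : NNReal) (hr : r ≤ 1) (S : Finset E) (m : ℕ) :
    Measure.pi (fun _ : ι => Measure.pi fun _ : E => (PMF.bernoulli r hr).toMeasure)
        {F | m ≤ #{i | ∀ x ∈ S, F i x = true}}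
      ≤ (Fintype.card ι).choose m * ((r : ℝ≥0∞) ^ #S) ^ m := by
  rw [← measure_pi_bernoulli_forall_true r hr S]
  exact measure_pi_le_card_filter_mem_le _ {g : E → Bool | ∀ x ∈ S, g x = true} m

theorem choose_mul_pow_le_inv_two_pow {t m : ℕ} {r : ℝ} (hr : 0 ≤ r) (hm : 6 * (t * r) ≤ m) :
    (t.choose m : ℝ) * r ^ m ≤ (2 ^ m)⁻¹ := by
  have htr : (t : ℝ) * r ≤ m / 6 := by linarith
  calc (t.choose m : ℝ) * r ^ m ≤ t ^ m / m ! * r ^ m := by gcongr; exact Nat.choose_le_pow_div m t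
    _ = (t * r) ^ m / m ! := by ring
    _ ≤ (m / 6) ^ m / m ! := by gcongr
    _ = (m ^ m / m !) / 6 ^ m := by rw [div_pow]; ring
    _ ≤ Real.exp m / 6 ^ m := by gcongr; exact Real.pow_div_factorial_le_exp _ (by positivity) m
    _ = (Real.exp 1 / 6) ^ m := by rw [div_pow, ← Real.exp_nat_mul, mul_one]
    _ ≤ (1 / 2) ^ m :=
        pow_le_pow_left₀ (by positivity) (by linarith [Real.exp_one_lt_three]) m
    _ = (2 ^ m)⁻¹ := by rw [one_div, inv_pow]

theorem inv_two_pow_le_inv_pow {n k m : ℕ} (hn : 0 < n) (hm : 6 * ((k + 1) * Real.log n) ≤ m) :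
    ((2 : ℝ) ^ m)⁻¹ ≤ ((n : ℝ) ^ (k + 1))⁻¹ := by
  have hn' : (0 : ℝ) < n := by exact_mod_cast hn
  refine inv_anti₀ (by positivity) ((Real.log_le_log_iff (by positivity) (by positivity)).mp ?_)
  rw [Real.log_pow, Real.log_pow]
  push_cast
  nlinarith [Real.log_two_gt_d9, (m.cast_nonneg : (0 : ℝ) ≤ m)]

theorem choose_ceil_mul_pow_le_inv_pow {n k t : ℕ} {r : ℝ} (hr : 0 ≤ r) (hn : 0 < n)
    (hlog : (k + 1) * Real.log n ≤ t * r) :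
    (t.choose ⌈6 * (t * r)⌉₊ : ℝ) * r ^ ⌈6 * (t * r)⌉₊ ≤ ((n : ℝ) ^ (k + 1))⁻¹ :=
  (choose_mul_pow_le_inv_two_pow hr (Nat.le_ceil _)).trans
    (inv_two_pow_le_inv_pow hn (by linarith [Nat.le_ceil (6 * (t * r))]))

theorem one_le_div_mul_pow {x : ℝ} {p k : ℕ} (hpk : p ≤ k) (hkx : k ≤ x) :
    1 ≤ x ^ k / ((p : ℝ) ^ p * (x - p) ^ (k - p)) * (p / x) ^ p := by
  have hxp : 0 ≤ x - p := by linarith [(Nat.cast_le (α := ℝ)).mpr hpk]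
  rcases (Nat.cast_nonneg k).trans hkx |>.eq_or_lt with hx | hx
  · obtain rfl : k = 0 := Nat.le_zero.mp (by exact_mod_cast hkx.trans hx.ge)
    obtain rfl : p = 0 := Nat.le_zero.mp hpk
    simp
  have hd : 0 < (x - p) ^ (k - p) := by
    rcases hpk.eq_or_lt with rfl | hlt
    · simp
    · have : (p : ℝ) + 1 ≤ k := by exact_mod_cast hlt
      exact pow_pos (by linarith) _
  have hpp : (0 : ℝ) < (p : ℝ) ^ p := by
    rcases p.eq_zero_or_pos with rfl | hp
    · simp
    · positivity
  rw [div_pow, div_mul_div_comm, le_div_iff₀ (by positivity), one_mul, ← pow_sub_mul_pow x hpk]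
  calc (p : ℝ) ^ p * (x - p) ^ (k - p) * x ^ p ≤ p ^ p * x ^ (k - p) * x ^ p := by
        gcongr; linarith
    _ = x ^ (k - p) * x ^ p * p ^ p := by ring

theorem mul_log_le_mul_pow {n k p t : ℕ} {c : ℝ} (hn : 0 < n) (hpk : p ≤ k) (hc : 1 ≤ c)
    (ht : (c * k) ^ k / ((p : ℝ) ^ p * (c * k - p) ^ (k - p)) * (k + 1) * Real.log n ≤ t) :
    (k + 1) * Real.log n ≤ t * ((p : ℝ) / (c * k)) ^ p := by
  have hratio := one_le_div_mul_pow hpk (le_mul_of_one_le_left k.cast_nonneg hc)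
  have hlog : 0 ≤ (k + 1) * Real.log n := by
    have : (1 : ℝ) ≤ n := by exact_mod_cast hn
    positivity
  calc (k + 1) * Real.log n
      ≤ ((c * k) ^ k / ((p : ℝ) ^ p * (c * k - p) ^ (k - p)) * (p / (c * k)) ^ p)
          * ((k + 1) * Real.log n) :=
        le_mul_of_one_le_left hlog hratio
    _ = (c * k) ^ k / ((p : ℝ) ^ p * (c * k - p) ^ (k - p)) * (k + 1) * Real.log n
          * (p / (c * k)) ^ p := by
        ring
    _ ≤ t * (p / (c * k)) ^ p := by gcongr

theorem choose_mul_inv_pow_succ_le {n p k : ℕ} (hn : 0 < n) (hpk : p ≤ k) :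
    (n.choose p : ℝ) * ((n : ℝ) ^ (k + 1))⁻¹ ≤ 1 / n := by
  have hn' : (1 : ℝ) ≤ n := by exact_mod_cast hn
  calc (n.choose p : ℝ) * ((n : ℝ) ^ (k + 1))⁻¹ ≤ n ^ k * ((n : ℝ) ^ (k + 1))⁻¹ := by
        gcongr
        exact (Nat.cast_le.mpr (n.choose_le_pow p)).trans_eq (Nat.cast_pow n p) |>.trans
          (pow_le_pow_right₀ hn' hpk)
    _ = 1 / n := by field_simp; ring

theorem stmt19_general {E : Type*} [Fintype E] [DecidableEq E] (n k p t : ℕ) (c : ℝ)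
    (hn : Fintype.card E = n) (hn2 : 2 ≤ n)
    (hpk : p ≤ k) (hc : 1 ≤ c) (hq : (p : ℝ) / (c * k) ≤ 1)
    (ht : ((c * k) ^ k / ((p : ℝ) ^ p * (c * k - p) ^ (k - p))) * (k + 1) * Real.log n
      ≤ t) :
    Measure.pi (fun _ : Fin t => Measure.pi (fun _ : E =>
        (PMF.bernoulli (Real.toNNReal ((p : ℝ) / (c * k)))
          (Real.toNNReal_le_one.mpr hq)).toMeasure))
      {F : Fin t → E → Bool | ∃ S : Finset E, S.card = p ∧
        6 * ((t : ℝ) * ((p : ℝ) / (c * k)) ^ p)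
          ≤ ((Finset.univ.filter (fun i : Fin t => ∀ x ∈ S, F i x = true)).card : ℝ)}
      ≤ ENNReal.ofReal ((n.choose p : ℝ) * ((n : ℝ) ^ (k + 1))⁻¹) ∧
    ENNReal.ofReal ((n.choose p : ℝ) * ((n : ℝ) ^ (k + 1))⁻¹)
      ≤ ENNReal.ofReal (1 / n) := by
  set q : ℝ := p / (c * k)
  have hn0 : 0 < n := by omega
  set m := ⌈6 * (t * q ^ p)⌉₊
  have htail : (t.choose m : ℝ≥0∞) * (ENNReal.ofReal q ^ p) ^ m
      ≤ ENNReal.ofReal ((n : ℝ) ^ (k + 1))⁻¹ := by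
    have hq0 : 0 ≤ q := by positivity
    rw [← ENNReal.ofReal_pow hq0, ← ENNReal.ofReal_pow (by positivity), ← ENNReal.ofReal_natCast,
      ← ENNReal.ofReal_mul (by positivity)]
    exact ENNReal.ofReal_le_ofReal
      (choose_ceil_mul_pow_le_inv_pow (by positivity) hn0 (mul_log_le_mul_pow hn0 hpk hc ht))
  refine ⟨?_, ENNReal.ofReal_le_ofReal (choose_mul_inv_pow_succ_le hn0 hpk)⟩
  calc _ ≤ Measure.pi _ {F : Fin t → E → Bool |
        ∃ S : Finset E, #S = p ∧ m ≤ #{i | ∀ x ∈ S, F i x = true}} :=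
        measure_mono <| by
          rintro F ⟨S, hS, hF⟩
          exact ⟨S, hS, Nat.ceil_le.mpr hF⟩
    _ ≤ ∑ S ∈ powersetCard p univ, ENNReal.ofReal ((n : ℝ) ^ (k + 1))⁻¹ :=
        (measure_exists_card_eq_le_sum _ _ p).trans <| sum_le_sum fun S hS => by
          refine (measure_pi_bernoulli_le_card_filter_forall_le (ι := Fin t) _ _ S m).trans ?_
          rwa [Fintype.card_fin, mem_powersetCard_univ.mp hS]
    _ = _ := by
        rw [sum_const, card_powersetCard, card_univ, hn, nsmul_eq_mul,
          ENNReal.ofReal_mul (by positivity), ENNReal.ofReal_natCast]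

/-- Failure probability bound for the degree parameter: under the random construction
with `t` sets, the probability that some `p`-subset `S` satisfies
`|χ(S)| ≥ 6·t·(p/(ck))^p` is at most `C(n,p)·n^{-k-1}`, which is at most `1/n`. -/
theorem stmt19 {E : Type*} [Fintype E] [DecidableEq E] (n k p t : ℕ) (c : ℝ)
    (hn : Fintype.card E = n) (hn2 : 2 ≤ n)
    (hp : 1 ≤ p) (hpk : p ≤ k) (hc : 1 ≤ c) (hq : (p : ℝ) / (c * k) ≤ 1)
    (ht : ((c * k) ^ k / ((p : ℝ) ^ p * (c * k - p) ^ (k - p))) * (k + 1) * Real.log n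
      ≤ t) :
    Measure.pi (fun _ : Fin t => Measure.pi (fun _ : E =>
        (PMF.bernoulli (Real.toNNReal ((p : ℝ) / (c * k)))
          (Real.toNNReal_le_one.mpr hq)).toMeasure))
      {F : Fin t → E → Bool | ∃ S : Finset E, S.card = p ∧
        6 * ((t : ℝ) * ((p : ℝ) / (c * k)) ^ p)
          ≤ ((Finset.univ.filter (fun i : Fin t => ∀ x ∈ S, F i x = true)).card : ℝ)}
      ≤ ENNReal.ofReal ((n.choose p : ℝ) * ((n : ℝ) ^ (k + 1))⁻¹) ∧
    ENNReal.ofReal ((n.choose p : ℝ) * ((n : ℝ) ^ (k + 1))⁻¹)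
      ≤ ENNReal.ofReal (1 / n) :=
  stmt19_general n k p t c hn hn2 hpk hc hq ht
end
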